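/- arXiv:2412.12707 — 2 statements merged into one kernel-verified Lean document; each statement's English description precedes it below -/
import Mathlib

section
/- Let n ≥ 3 and let η : [0, ∞) → ℝ be a smooth function with η ≡ 1 on [0,1], η ≡ 0 on [2, ∞), and η' ≤ 0. Define u(r) = ∫_r^∞ [2^{-n} η(s) s + (1 − η(s)) s^{1-n}] ds. Then u is well-defined (the integral converges), u > 0, and the radial Laplacian Δu := u'' + (n-1)/r · u' satisfies Δu = -2^{-n} n η(r) + η'(r) r (r^{-n} − 2^{-n}), which is ≤ 0 for all r > 0, and Δu ≤ -2^{-n} n < 0 for r < 1. -/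
open Set MeasureTheory

/-- For `n ≥ 3` and a smooth cutoff `η` with `η ≡ 1` on `[0,1]`, `η ≡ 0` on `[2,∞)`,
`η' ≤ 0`, the radial function `u(r) = ∫_r^∞ [2^{-n} η(s) s + (1−η(s)) s^{1-n}] ds`
is well defined, positive, and its radial Laplacian `u'' + (n-1)/r · u'` equals
`-2^{-n} n η(r) + η'(r) r (r^{-n} − 2^{-n})`, which is `≤ 0` for all `r > 0` and
`≤ -2^{-n} n < 0` for `r < 1`. -/
theorem stmt_6 (n : ℕ) (hn : 3 ≤ n) (η : ℝ → ℝ) (hη : ContDiff ℝ (⊤ : ℕ∞) η)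
    (hη1 : ∀ s ≤ (1:ℝ), η s = 1) (hη0 : ∀ s ≥ (2:ℝ), η s = 0)
    (hη' : ∀ s : ℝ, 0 ≤ s → deriv η s ≤ 0) :
    let f : ℝ → ℝ := fun s => (2:ℝ)^(-(n:ℝ)) * η s * s + (1 - η s) * s^((1:ℝ) - n)
    let u : ℝ → ℝ := fun r => ∫ s in Set.Ioi r, f s
    (∀ r > (0:ℝ), IntegrableOn f (Set.Ioi r)) ∧
    (∀ r > (0:ℝ), 0 < u r) ∧
    (∀ r > (0:ℝ),
      deriv (deriv u) r + ((n:ℝ) - 1) / r * deriv u r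
        = -(2:ℝ)^(-(n:ℝ)) * n * η r + deriv η r * r * (r^(-(n:ℝ)) - (2:ℝ)^(-(n:ℝ)))) ∧
    (∀ r > (0:ℝ),
      deriv (deriv u) r + ((n:ℝ) - 1) / r * deriv u r ≤ 0) ∧
    (∀ r : ℝ, 0 < r → r < 1 →
      deriv (deriv u) r + ((n:ℝ) - 1) / r * deriv u r ≤ -(2:ℝ)^(-(n:ℝ)) * n) ∧
    -(2:ℝ)^(-(n:ℝ)) * n < 0 := by
  intro f u
  have hn3 : (3:ℝ) ≤ (n:ℝ) := by exact_mod_cast hn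
  have hB : (0:ℝ) < (2:ℝ)^(-(n:ℝ)) := Real.rpow_pos_of_pos two_pos _
  have hηc : Continuous η := hη.continuous
  have hηd : Differentiable ℝ η := hη.differentiable (by simp)
  -- η is antitone on [0,∞)
  have hmono : AntitoneOn η (Ici (0:ℝ)) := by
    apply antitoneOn_of_deriv_nonpos (convex_Ici 0) hηc.continuousOn
      hηd.differentiableOn
    intro x hx
    rw [interior_Ici] at hx
    exact hη' x hx.le
  have hη_nonneg : ∀ s : ℝ, 0 ≤ s → 0 ≤ η s := by
    intro s hs
    rcases le_total s 2 with h | h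
    · have h2 := hmono (show s ∈ Ici (0:ℝ) from hs)
        (show (2:ℝ) ∈ Ici (0:ℝ) by norm_num) h
      rw [hη0 2 le_rfl] at h2
      exact h2
    · rw [hη0 s h]
  have hη_le_one : ∀ s : ℝ, 0 ≤ s → η s ≤ 1 := by
    intro s hs
    rcases le_total s 1 with h | h
    · rw [hη1 s h]
    · have h2 := hmono (show (1:ℝ) ∈ Ici (0:ℝ) by norm_num)
        (show s ∈ Ici (0:ℝ) from hs) h
      rw [hη1 1 le_rfl] at h2
      exact h2
  -- f is positive on (0,∞)
  have hfpos : ∀ s : ℝ, 0 < s → 0 < f s := by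
    intro s hs
    have h1 : 0 < s^((1:ℝ) - n) := Real.rpow_pos_of_pos hs _
    rcases eq_or_lt_of_le (hη_nonneg s hs.le) with h0 | h0
    · have : f s = s^((1:ℝ) - n) := by simp [f, ← h0]
      rw [this]; exact h1
    · have t1 : 0 < (2:ℝ)^(-(n:ℝ)) * η s * s := mul_pos (mul_pos hB h0) hs
      have t2 : 0 ≤ (1 - η s) * s^((1:ℝ) - n) :=
        mul_nonneg (by linarith [hη_le_one s hs.le]) h1.le
      simp only [f]
      linarith
  -- f is continuous on (0,∞)
  have hfc : ∀ s : ℝ, 0 < s → ContinuousAt f s := by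
    intro s hs
    have h1 : ContinuousAt (fun x : ℝ => x^((1:ℝ) - n)) s :=
      Real.continuousAt_rpow_const s _ (Or.inl hs.ne')
    exact ((continuousAt_const.mul hηc.continuousAt).mul continuousAt_id).add
      ((continuousAt_const.sub hηc.continuousAt).mul h1)
  have hfcOn : ContinuousOn f (Ioi (0:ℝ)) := fun s hs => (hfc s hs).continuousWithinAt
  -- integrability
  have hInt : ∀ r > (0:ℝ), IntegrableOn f (Set.Ioi r) := by
    intro r hr
    have h2 : IntegrableOn f (Ioi (2:ℝ)) := by
      have hi := integrableOn_Ioi_rpow_of_lt (show (1:ℝ) - n < -1 by linarith)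
        (show (0:ℝ) < 2 by norm_num)
      apply hi.congr_fun _ measurableSet_Ioi
      intro s hs
      simp [f, hη0 s (le_of_lt hs)]
    have h1 : IntegrableOn f (Ioc r 2) := by
      have hsub : Icc r 2 ⊆ Ioi (0:ℝ) := fun x hx => lt_of_lt_of_le hr hx.1
      exact ((hfcOn.mono hsub).integrableOn_Icc).mono_set Ioc_subset_Icc_self
    apply (h1.union h2).mono_set
    intro x hx
    rcases le_or_gt x 2 with h | h
    · exact Or.inl ⟨hx, h⟩
    · exact Or.inr h
  -- positivity of u
  have hupos : ∀ r > (0:ℝ), 0 < u r := by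
    intro r hr
    have hpos : 0 ≤ᵐ[volume.restrict (Ioi r)] f := by
      filter_upwards [ae_restrict_mem measurableSet_Ioi] with x hx
      exact (hfpos x (hr.trans hx)).le
    rw [show u r = ∫ s in Set.Ioi r, f s from rfl,
      setIntegral_pos_iff_support_of_nonneg_ae hpos (hInt r hr)]
    have hsub : Ioi r ⊆ Function.support f ∩ Ioi r :=
      fun x hx => ⟨(hfpos x (hr.trans hx)).ne', hx⟩
    refine lt_of_lt_of_le ?_ (measure_mono hsub)
    rw [Real.volume_Ioi]
    exact ENNReal.zero_lt_top
  -- first derivative of u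
  have hu' : ∀ r : ℝ, 0 < r → HasDerivAt u (-(f r)) r := by
    intro r hr
    set c := r + 3 with hc
    have hrc : r < c := by rw [hc]; linarith
    have hcpos : (0:ℝ) < c := by linarith
    have heq : ∀ x ∈ Ioo (0:ℝ) c, u x = (∫ s in x..c, f s) + u c := by
      intro x hx
      rw [intervalIntegral.integral_of_le hx.2.le,
        show u x = ∫ s in Set.Ioi x, f s from rfl,
        show u c = ∫ s in Set.Ioi c, f s from rfl,
        ← setIntegral_union Ioc_disjoint_Ioi_same measurableSet_Ioi
          ((hInt x hx.1).mono_set Ioc_subset_Ioi_self) (hInt c hcpos),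
        Ioc_union_Ioi_eq_Ioi hx.2.le]
    have hid : IntervalIntegrable f volume r c :=
      ⟨(hInt r hr).mono_set Ioc_subset_Ioi_self,
       by rw [Ioc_eq_empty (not_lt.mpr hrc.le)]; exact integrableOn_empty⟩
    have hFder : HasDerivAt (fun x => ∫ s in x..c, f s) (-(f r)) r :=
      intervalIntegral.integral_hasDerivAt_left hid
        (hfcOn.stronglyMeasurableAtFilter isOpen_Ioi r hr) (hfc r hr)
    have h2 : HasDerivAt (fun x => (∫ s in x..c, f s) + u c) (-(f r)) r :=
      hFder.add_const _
    apply h2.congr_of_eventuallyEq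
    filter_upwards [Ioo_mem_nhds hr hrc] with x hx
    exact heq x hx
  have hd1 : ∀ r : ℝ, 0 < r → deriv u r = -(f r) := fun r hr => (hu' r hr).deriv
  -- derivative of f
  have hf' : ∀ r : ℝ, 0 < r → HasDerivAt f
      ((2:ℝ)^(-(n:ℝ)) * deriv η r * r + (2:ℝ)^(-(n:ℝ)) * η r * 1 +
       ((0 - deriv η r) * r^((1:ℝ) - n) +
        (1 - η r) * (((1:ℝ) - n) * r^(((1:ℝ) - n) - 1)))) r := by
    intro r hr
    have h1 : HasDerivAt (fun s : ℝ => s^((1:ℝ) - n))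
        (((1:ℝ) - n) * r^(((1:ℝ) - n) - 1)) r :=
      Real.hasDerivAt_rpow_const (Or.inl hr.ne')
    have h2 : HasDerivAt η (deriv η r) r := (hηd r).hasDerivAt
    exact ((h2.const_mul ((2:ℝ)^(-(n:ℝ)))).mul (hasDerivAt_id' (x := r))).add
      (((hasDerivAt_const r (1:ℝ)).sub h2).mul h1)
  -- the Laplacian identity
  have hLap : ∀ r > (0:ℝ),
      deriv (deriv u) r + ((n:ℝ) - 1) / r * deriv u r
        = -(2:ℝ)^(-(n:ℝ)) * n * η r + deriv η r * r * (r^(-(n:ℝ)) - (2:ℝ)^(-(n:ℝ))) := by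
    intro r hr
    have hev : deriv u =ᶠ[nhds r] fun x => -(f x) := by
      filter_upwards [isOpen_Ioi.mem_nhds hr] with x hx
      exact hd1 x hx
    rw [hev.deriv_eq, (show HasDerivAt (fun x => -(f x)) _ r from (hf' r hr).neg).deriv, hd1 r hr]
    have e1 : r^((1:ℝ) - n) = r * r^(-(n:ℝ)) := by
      rw [show (1:ℝ) - n = 1 + (-(n:ℝ)) by ring, Real.rpow_add hr, Real.rpow_one]
    have e2 : r^(((1:ℝ) - n) - 1) = r^(-(n:ℝ)) := by
      rw [show ((1:ℝ) - n) - 1 = -(n:ℝ) by ring]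
    simp only [f]
    rw [e1, e2]
    field_simp
    ring
  -- nonpositivity of the extra term
  have hterm : ∀ r : ℝ, 0 < r →
      deriv η r * r * (r^(-(n:ℝ)) - (2:ℝ)^(-(n:ℝ))) ≤ 0 := by
    intro r hr
    rcases le_or_gt r 2 with h | h
    · have hA : (2:ℝ)^(-(n:ℝ)) ≤ r^(-(n:ℝ)) :=
        Real.rpow_le_rpow_of_nonpos hr h (by simp [Nat.cast_nonneg])
      have h1 : deriv η r * r ≤ 0 :=
        mul_nonpos_of_nonpos_of_nonneg (hη' r hr.le) hr.le
      exact mul_nonpos_of_nonpos_of_nonneg h1 (by linarith)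
    · have hd0 : deriv η r = 0 := by
        have hev : η =ᶠ[nhds r] fun _ => 0 := by
          filter_upwards [Ioi_mem_nhds h] with x hx
          exact hη0 x hx.le
        rw [hev.deriv_eq, deriv_const]
      rw [hd0]
      simp
  have hlast : -(2:ℝ)^(-(n:ℝ)) * (n:ℝ) < 0 := by
    have h1 : (0:ℝ) < (2:ℝ)^(-(n:ℝ)) * (n:ℝ) := mul_pos hB (by linarith)
    linarith
  refine ⟨hInt, hupos, hLap, ?_, ?_, hlast⟩
  · intro r hr
    rw [hLap r hr]
    have t1 : 0 ≤ (2:ℝ)^(-(n:ℝ)) * n * η r :=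
      mul_nonneg (mul_nonneg hB.le (by linarith)) (hη_nonneg r hr.le)
    linarith [hterm r hr]
  · intro r hr hr1
    rw [hLap r hr, hη1 r hr1.le]
    linarith [hterm r hr]
end

section
/- Let n ≥ 2 and γ ∈ (0, 4/(n-1)). Define a(γ) = -1/(n-1), b(γ) = ((3-n)/(n-1))γ, c(γ) = ((n-2)/(n-1))γ² − γ. Then a(γ) < 0 and b(γ)² − 4a(γ)c(γ) = γ(γ − 4/(n-1)) < 0; consequently the quadratic form Q(h, Y) = a h² + b hY + c Y² is negative definite, i.e., Q(h, Y) < 0 for all (h, Y) ≠ (0, 0). -/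
/-- For `n ≥ 2` and `γ ∈ (0, 4/(n-1))`, with `a = -1/(n-1)`, `b = ((3-n)/(n-1))γ`,
`c = ((n-2)/(n-1))γ² − γ`, one has `a < 0` and `b² − 4ac = γ(γ − 4/(n-1)) < 0`;
consequently `Q(h,Y) = ah² + bhY + cY²` is negative definite. -/
theorem stmt_18 (n : ℕ) (hn : 2 ≤ n) (γ : ℝ) (hγ0 : 0 < γ)
    (hγ : γ < 4 / ((n : ℝ) - 1)) :
    let a : ℝ := -1 / ((n:ℝ) - 1)
    let b : ℝ := (((3:ℝ) - n) / ((n:ℝ) - 1)) * γ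
    let c : ℝ := ((n:ℝ) - 2) / ((n:ℝ) - 1) * γ^2 - γ
    (a < 0) ∧
    (b^2 - 4 * a * c = γ * (γ - 4 / ((n:ℝ) - 1))) ∧
    (γ * (γ - 4 / ((n:ℝ) - 1)) < 0) ∧
    (∀ h Y : ℝ, (h, Y) ≠ (0, 0) → a * h^2 + b * h * Y + c * Y^2 < 0) := by
  intro a b c
  have hn1 : (1:ℝ) ≤ (n:ℝ) - 1 := by
    have : (2:ℝ) ≤ (n:ℝ) := by exact_mod_cast hn
    linarith
  have hpos : (0:ℝ) < (n:ℝ) - 1 := by linarith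
  have hne : ((n:ℝ) - 1) ≠ 0 := ne_of_gt hpos
  have ha : a < 0 := by
    simp only [a]
    exact div_neg_of_neg_of_pos (by norm_num) hpos
  have hdisc : b^2 - 4 * a * c = γ * (γ - 4 / ((n:ℝ) - 1)) := by
    simp only [a, b, c]
    field_simp
    ring
  have hneg : γ * (γ - 4 / ((n:ℝ) - 1)) < 0 :=
    mul_neg_of_pos_of_neg hγ0 (by linarith)
  refine ⟨ha, hdisc, hneg, fun h Y hne' => ?_⟩
  have hd : b^2 - 4 * a * c < 0 := by rw [hdisc]; exact hneg
  rcases eq_or_ne Y 0 with rfl | hY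
  · have hh : h ≠ 0 := by simpa using hne'
    have : a * h^2 < 0 := mul_neg_of_neg_of_pos ha (by positivity)
    nlinarith
  · have hY2 : (0:ℝ) < Y^2 := by positivity
    nlinarith [sq_nonneg (2 * a * h + b * Y), mul_neg_of_neg_of_pos ha hY2]
end
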